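/- arXiv:2409.07093 — 3 statements merged into one kernel-verified Lean document; each statement's English description precedes it below -/
import Mathlib

section
/- Let Λ = (λ_k)_{k∈ℤ} be a strictly increasing sequence of real numbers such that λ_{k+1} − λ_k → +∞ as k → ±∞, and assume in addition that the series ∑_{k∈ℤ} 1/(1+|λ_k|) converges. Then for every T > 0 there exists a constant A > 0 (depending only on T and Λ) such that for every N ≥ 1 and every sequence of complex numbers (a_k)_{|k|≤N}, one has A · max_{|k|≤N} |a_k| ≤ (1/T) ∫_{−T/2}^{T/2} |∑_{k=−N}^{N} a_k e^{2πi λ_k t}| dt. -/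
/-!
If the frequencies `ω j` are `γ`-separated, averaging `t ↦ P(t) e(-ω k t)`, `e(x) = exp (2πix)`,
along `t = v - u` over `(u, v) ∈ [0, ℓ]²` returns `a k ℓ²` up to an error of at most
`∑_{j ≠ k} ‖a j‖ / (π (ω j - ω k))² ≤ max ‖a‖ / (3 γ²)`. At the largest coefficient this gives
Ingham's inequality `ℓ max ‖a‖ ≤ 2 ∫_{-ℓ}^{ℓ} ‖P‖` as soon as `γ ℓ ≥ 1`.

Since the gaps `Λ (k + 1) - Λ k` tend to infinity, all but finitely many of them are at least
`4 / T`, and Ingham's inequality holds on `[-T/4, T/4]` for those indices. The finitely many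
remaining frequencies are added one at a time by Haraux's trick, each at the cost of a slightly
longer interval: `P(t + h) - e(ω b h) P(t)` has no `ω b` component, which bounds every other
coefficient by the inequality already known, and `a b` is then recovered from the averaging
estimate above.
-/

open Real MeasureTheory Filter Finset intervalIntegral

noncomputable section

namespace NonharmonicFourier

variable {ι : Type*}

def freqExp (μ t : ℝ) : ℂ := Complex.exp (2 * π * Complex.I * μ * t)

def trigPoly (ω : ι → ℝ) (s : Finset ι) (a : ι → ℂ) (t : ℝ) : ℂ :=
  ∑ j ∈ s, a j * freqExp (ω j) t

lemma freqExp_eq_exp_I_mul (μ t : ℝ) :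
    freqExp μ t = Complex.exp (Complex.I * ↑(2 * π * μ * t)) := by
  rw [freqExp]; push_cast; ring_nf

lemma norm_freqExp (μ t : ℝ) : ‖freqExp μ t‖ = 1 := by
  rw [freqExp_eq_exp_I_mul, mul_comm, Complex.norm_exp_ofReal_mul_I]

@[simp] lemma freqExp_zero_left (t : ℝ) : freqExp 0 t = 1 := by simp [freqExp]

lemma freqExp_add_left (μ ν t : ℝ) : freqExp (μ + ν) t = freqExp μ t * freqExp ν t := by
  simp only [freqExp, ← Complex.exp_add]; push_cast; ring_nf

lemma freqExp_add_right (μ t h : ℝ) : freqExp μ (t + h) = freqExp μ t * freqExp μ h := by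
  simp only [freqExp, ← Complex.exp_add]; push_cast; ring_nf

lemma freqExp_sub_right (μ v u : ℝ) : freqExp μ (v - u) = freqExp μ v * freqExp (-μ) u := by
  simp only [freqExp, ← Complex.exp_add]; push_cast; ring_nf

@[fun_prop]
lemma continuous_freqExp (μ : ℝ) : Continuous (freqExp μ) := by
  unfold freqExp; fun_prop

lemma continuous_trigPoly (ω : ι → ℝ) (s : Finset ι) (a : ι → ℂ) :
    Continuous (trigPoly ω s a) :=
  continuous_finsetSum s fun j _ => continuous_const.mul (continuous_freqExp (ω j))

lemma norm_trigPoly_sub_const (ω : ι → ℝ) (s : Finset ι) (a : ι → ℂ) (c t : ℝ) :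
    ‖trigPoly (fun j => ω j - c) s a t‖ = ‖trigPoly ω s a t‖ := by
  have : trigPoly (fun j => ω j - c) s a t = trigPoly ω s a t * freqExp (-c) t := by
    simp only [trigPoly, sum_mul, sub_eq_add_neg, freqExp_add_left, mul_assoc]
  rw [this, norm_mul, norm_freqExp, mul_one]

lemma norm_freqExp_sub_one (μ h : ℝ) : ‖freqExp μ h - 1‖ = 2 * |sin (π * μ * h)| := by
  rw [freqExp_eq_exp_I_mul, Complex.norm_exp_I_mul_ofReal_sub_one, norm_mul, Real.norm_eq_abs,
    Real.norm_eq_abs, abs_two]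
  ring_nf

lemma integral_freqExp {μ : ℝ} (hμ : μ ≠ 0) (ℓ : ℝ) :
    ∫ v in (0 : ℝ)..ℓ, freqExp μ v = (freqExp μ ℓ - 1) / (2 * π * Complex.I * μ) := by
  have hc : (2 * π * Complex.I * μ : ℂ) ≠ 0 := by simp [hμ, pi_ne_zero]
  simp only [freqExp]
  rw [integral_exp_mul_complex hc]
  simp

lemma norm_integral_freqExp_le {μ : ℝ} (hμ : μ ≠ 0) (ℓ : ℝ) :
    ‖∫ v in (0 : ℝ)..ℓ, freqExp μ v‖ ≤ 1 / (π * |μ|) := by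
  have hnum : ‖freqExp μ ℓ - 1‖ ≤ 2 := by
    simpa [norm_freqExp, one_add_one_eq_two] using norm_sub_le (freqExp μ ℓ) 1
  have hden : ‖(2 * π * Complex.I * μ : ℂ)‖ = 2 * (π * |μ|) := by
    simp [abs_of_pos pi_pos, mul_assoc]
  rw [integral_freqExp hμ, norm_div, hden, div_le_div_iff₀ (by positivity) (by positivity)]
  nlinarith [mul_pos pi_pos (abs_pos.2 hμ)]

lemma norm_integral_freqExp_mul_le {μ : ℝ} (hμ : μ ≠ 0) (ℓ : ℝ) :
    ‖(∫ v in (0 : ℝ)..ℓ, freqExp μ v) * ∫ v in (0 : ℝ)..ℓ, freqExp (-μ) v‖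
      ≤ 1 / (π ^ 2 * μ ^ 2) := by
  rw [norm_mul]
  calc _ ≤ 1 / (π * |μ|) * (1 / (π * |-μ|)) :=
        mul_le_mul (norm_integral_freqExp_le hμ ℓ) (norm_integral_freqExp_le (neg_ne_zero.2 hμ) ℓ)
          (norm_nonneg _) (by positivity)
    _ = 1 / (π ^ 2 * μ ^ 2) := by rw [abs_neg, ← sq_abs μ]; ring

lemma integral_norm_mono_interval {f : ℝ → ℂ} (hf : Continuous f) {a b a' b' : ℝ}
    (ha : a' ≤ a) (hab : a ≤ b) (hb : b ≤ b') :
    ∫ t in a..b, ‖f t‖ ≤ ∫ t in a'..b', ‖f t‖ :=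
  integral_mono_interval ha hab hb (Eventually.of_forall fun _ => norm_nonneg _)
    (hf.norm.intervalIntegrable _ _)

lemma integral_norm_add_sub_mul_le {f : ℝ → ℂ} (hf : Continuous f) {z : ℂ} (hz : ‖z‖ = 1)
    {ℓ h η : ℝ} (hℓ : 0 ≤ ℓ) (hh : h ∈ Set.Icc 0 η) :
    ∫ t in -ℓ..ℓ, ‖f (t + h) - z * f t‖ ≤ 2 * ∫ t in -(ℓ + η)..(ℓ + η), ‖f t‖ := by
  have hfh : Continuous fun t => f (t + h) := hf.comp (continuous_add_const h)
  calc ∫ t in -ℓ..ℓ, ‖f (t + h) - z * f t‖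
      ≤ ∫ t in -ℓ..ℓ, (‖f (t + h)‖ + ‖f t‖) := by
        refine integral_mono_on (by linarith)
          ((hfh.sub (continuous_const.mul hf)).norm.intervalIntegrable _ _)
          ((hfh.norm.add hf.norm).intervalIntegrable _ _) fun t _ => ?_
        simpa [hz] using norm_sub_le (f (t + h)) (z * f t)
    _ = (∫ t in (-ℓ + h)..(ℓ + h), ‖f t‖) + ∫ t in -ℓ..ℓ, ‖f t‖ := by
        rw [integral_add (hfh.norm.intervalIntegrable _ _) (hf.norm.intervalIntegrable _ _),
          integral_comp_add_right (fun t => ‖f t‖)]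
    _ ≤ 2 * ∫ t in -(ℓ + η)..(ℓ + η), ‖f t‖ := by
        have h₁ := integral_norm_mono_interval hf (a := -ℓ + h) (b := ℓ + h) (a' := -(ℓ + η))
          (b' := ℓ + η) (by linarith [hh.1, hh.2]) (by linarith [hh.1]) (by linarith [hh.1, hh.2])
        have h₂ := integral_norm_mono_interval hf (a := -ℓ) (b := ℓ) (a' := -(ℓ + η))
          (b' := ℓ + η) (by linarith [hh.1, hh.2]) (by linarith) (by linarith [hh.1, hh.2])
        linarith

lemma norm_integral_integral_sub_le {f : ℝ → ℂ} (hf : Continuous f) {ℓ : ℝ} (hℓ : 0 ≤ ℓ) :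
    ‖∫ u in (0 : ℝ)..ℓ, ∫ v in (0 : ℝ)..ℓ, f (v - u)‖ ≤ ℓ * ∫ t in -ℓ..ℓ, ‖f t‖ := by
  have hinner : ∀ u ∈ Set.uIoc 0 ℓ, ‖∫ v in (0 : ℝ)..ℓ, f (v - u)‖ ≤ ∫ t in -ℓ..ℓ, ‖f t‖ := by
    intro u hu
    rw [Set.uIoc_of_le hℓ] at hu
    calc ‖∫ v in (0 : ℝ)..ℓ, f (v - u)‖ ≤ ∫ v in (0 : ℝ)..ℓ, ‖f (v - u)‖ :=
          norm_integral_le_integral_norm hℓ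
      _ = ∫ t in (0 - u)..(ℓ - u), ‖f t‖ := integral_comp_sub_right (fun t => ‖f t‖) u
      _ ≤ ∫ t in -ℓ..ℓ, ‖f t‖ :=
          integral_norm_mono_interval hf (by linarith [hu.2]) (by linarith) (by linarith [hu.1])
  simpa [abs_of_nonneg hℓ, mul_comm] using norm_integral_le_of_norm_le_const hinner

lemma integral_integral_trigPoly_sub (ω : ι → ℝ) (s : Finset ι) (a : ι → ℂ) (ℓ : ℝ) :
    ∫ u in (0 : ℝ)..ℓ, ∫ v in (0 : ℝ)..ℓ, trigPoly ω s a (v - u)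
      = ∑ j ∈ s, a j * ((∫ v in (0 : ℝ)..ℓ, freqExp (ω j) v) *
          ∫ u in (0 : ℝ)..ℓ, freqExp (-ω j) u) := by
  have hinner : ∀ u, ∫ v in (0 : ℝ)..ℓ, trigPoly ω s a (v - u)
      = ∑ j ∈ s, (a j * ∫ v in (0 : ℝ)..ℓ, freqExp (ω j) v) * freqExp (-ω j) u := by
    intro u
    simp only [trigPoly, freqExp_sub_right]
    rw [integral_finsetSum fun j _ => (by fun_prop : Continuous _).intervalIntegrable _ _]
    refine sum_congr rfl fun j _ => ?_
    rw [← intervalIntegral.integral_const_mul, ← intervalIntegral.integral_mul_const]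
    congr 1; ext v; ring
  simp only [hinner]
  rw [integral_finsetSum fun j _ => (by fun_prop : Continuous _).intervalIntegrable _ _]
  refine sum_congr rfl fun j _ => ?_
  rw [intervalIntegral.integral_const_mul]; ring

lemma norm_mul_sq_le_integral_add_sum [DecidableEq ι] {ω : ι → ℝ} {s : Finset ι} {k : ι}
    (hk : k ∈ s) (hω : ∀ j ∈ s.erase k, ω j ≠ ω k) (a : ι → ℂ) {ℓ : ℝ} (hℓ : 0 ≤ ℓ) :
    ‖a k‖ * ℓ ^ 2 ≤ ℓ * (∫ t in -ℓ..ℓ, ‖trigPoly ω s a t‖)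
      + ∑ j ∈ s.erase k, ‖a j‖ / (π ^ 2 * (ω j - ω k) ^ 2) := by
  set ν : ι → ℝ := fun j => ω j - ω k
  set w : ι → ℂ := fun j =>
    (∫ v in (0 : ℝ)..ℓ, freqExp (ν j) v) * ∫ v in (0 : ℝ)..ℓ, freqExp (-ν j) v
  have hwk : w k = (ℓ : ℂ) ^ 2 := by simp [w, ν, sq]
  have hw : ∀ j ∈ s.erase k, ‖a j * w j‖ ≤ ‖a j‖ / (π ^ 2 * (ω j - ω k) ^ 2) := fun j hj => by
    rw [norm_mul, div_eq_mul_one_div]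
    exact mul_le_mul_of_nonneg_left
      (norm_integral_freqExp_mul_le (sub_ne_zero.2 (hω j hj)) ℓ) (norm_nonneg _)
  have hdouble : a k * w k = (∫ u in (0 : ℝ)..ℓ, ∫ v in (0 : ℝ)..ℓ, trigPoly ν s a (v - u))
      - ∑ j ∈ s.erase k, a j * w j := by
    rw [integral_integral_trigPoly_sub, ← add_sum_erase s _ hk, add_sub_cancel_right]
  have hJ : ∫ t in -ℓ..ℓ, ‖trigPoly ν s a t‖ = ∫ t in -ℓ..ℓ, ‖trigPoly ω s a t‖ := by
    simp only [ν, norm_trigPoly_sub_const]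
  calc ‖a k‖ * ℓ ^ 2 = ‖a k * w k‖ := by
        rw [hwk, norm_mul, norm_pow, Complex.norm_real, Real.norm_of_nonneg hℓ]
    _ ≤ ‖∫ u in (0 : ℝ)..ℓ, ∫ v in (0 : ℝ)..ℓ, trigPoly ν s a (v - u)‖
          + ∑ j ∈ s.erase k, ‖a j * w j‖ := by
        rw [hdouble]; exact (norm_sub_le _ _).trans (add_le_add le_rfl (norm_sum_le _ _))
    _ ≤ _ := by
        rw [← hJ]
        exact add_le_add (norm_integral_integral_sub_le (continuous_trigPoly _ _ _) hℓ)
          (sum_le_sum hw)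

def Separated (ω : ι → ℝ) (δ : ℝ) (S : Set ι) : Prop :=
  S.Pairwise fun i j => δ ≤ |ω i - ω j|

lemma Separated.mono {ω : ι → ℝ} {δ : ℝ} {S T : Set ι} (h : Separated ω δ S) (hT : T ⊆ S) :
    Separated ω δ T :=
  Set.Pairwise.mono hT h

lemma Separated.neg {ω : ι → ℝ} {δ : ℝ} {S : Set ι} (h : Separated ω δ S) :
    Separated (fun j => -ω j) δ S := fun i hi j hj hij => by
  simpa only [neg_sub_neg, abs_sub_comm] using h hi hj hij

lemma separated_of_le_sub {Λ : ℤ → ℝ} (hΛ : Monotone Λ) {δ : ℝ} {S : Set ℤ}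
    (hgap : ∀ i ∈ S, δ ≤ Λ (i + 1) - Λ i) : Separated Λ δ S := by
  have key : ∀ i ∈ S, ∀ j, i < j → δ ≤ Λ j - Λ i := fun i hi j hij => by
    linarith [hgap i hi, hΛ (show i + 1 ≤ j by omega)]
  intro i hi j hj hij
  rcases hij.lt_or_gt with h | h
  · rw [abs_sub_comm]; exact (key i hi j h).trans (le_abs_self _)
  · exact (key j hj i h).trans (le_abs_self _)

/-- The points above `x` sit at distinct multiples `⌊(ω j - x) / δ⌋₊ ≥ 1` of `δ`, so the sum is
dominated by `δ⁻² ∑ 1 / n² = π² / (6 δ²)`. -/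
lemma sum_inv_sq_le_of_separated {ω : ι → ℝ} {δ : ℝ} (hδ : 0 < δ) {s : Finset ι}
    (hsep : Separated ω δ s) {x : ℝ} (hx : ∀ j ∈ s, δ ≤ ω j - x) :
    ∑ j ∈ s, 1 / (ω j - x) ^ 2 ≤ π ^ 2 / (6 * δ ^ 2) := by
  set y : ι → ℝ := fun j => (ω j - x) / δ
  set n : ι → ℕ := fun j => ⌊y j⌋₊
  have hy : ∀ j, ω j - x = δ * y j := fun j => by simp only [y]; field_simp
  have hy1 : ∀ j ∈ s, 1 ≤ y j := fun j hj => by rw [le_div_iff₀ hδ, one_mul]; exact hx j hj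
  have hn : ∀ j ∈ s, (1 : ℝ) ≤ n j ∧ (n j : ℝ) ≤ y j := fun j hj =>
    ⟨by exact_mod_cast Nat.le_floor (by exact_mod_cast hy1 j hj),
      Nat.floor_le (zero_le_one.trans (hy1 j hj))⟩
  have hinj : Set.InjOn n s := by
    intro i hi j hj hij
    by_contra hne
    have hsep_ij : δ ≤ |ω i - ω j| := hsep hi hj hne
    have hi' := Nat.lt_floor_add_one (y i)
    have hj' := Nat.lt_floor_add_one (y j)
    have hni := (hn i hi).2
    have hnj := (hn j hj).2
    simp only [n] at hij hi' hj' hni hnj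
    rw [show ω i - ω j = δ * (y i - y j) by rw [mul_sub, ← hy, ← hy]; ring, abs_mul,
      abs_of_pos hδ] at hsep_ij
    rw [hij] at hi' hni
    have : |y i - y j| < 1 := abs_sub_lt_iff.2 ⟨by linarith, by linarith⟩
    nlinarith
  have hterm : ∀ j ∈ s, 1 / (ω j - x) ^ 2 ≤ 1 / δ ^ 2 * (1 / (n j : ℝ) ^ 2) := fun j hj => by
    have hpos : 0 < δ * n j := mul_pos hδ (by linarith [(hn j hj).1])
    rw [hy j, one_div_mul_one_div, ← mul_pow]
    exact one_div_le_one_div_of_le (pow_pos hpos 2)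
      (pow_le_pow_left₀ hpos.le (mul_le_mul_of_nonneg_left (hn j hj).2 hδ.le) 2)
  calc ∑ j ∈ s, 1 / (ω j - x) ^ 2 ≤ ∑ j ∈ s, 1 / δ ^ 2 * (1 / (n j : ℝ) ^ 2) := sum_le_sum hterm
    _ = 1 / δ ^ 2 * ∑ m ∈ s.image n, 1 / (m : ℝ) ^ 2 := by rw [mul_sum, sum_image hinj]
    _ ≤ 1 / δ ^ 2 * (π ^ 2 / 6) := by
        gcongr; exact sum_le_hasSum _ (fun _ _ => by positivity) hasSum_zeta_two
    _ = π ^ 2 / (6 * δ ^ 2) := by ring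

lemma sum_erase_inv_sq_le_of_separated [DecidableEq ι] {ω : ι → ℝ} {δ : ℝ} (hδ : 0 < δ)
    {s : Finset ι} (hsep : Separated ω δ s) {k : ι} (hk : k ∈ s) :
    ∑ j ∈ s.erase k, 1 / (ω j - ω k) ^ 2 ≤ π ^ 2 / (3 * δ ^ 2) := by
  have hdist : ∀ j ∈ s.erase k, δ ≤ |ω j - ω k| := fun j hj =>
    hsep (mem_of_mem_erase hj) hk (ne_of_mem_erase hj)
  have habove := sum_inv_sq_le_of_separated hδ (s := (s.erase k).filter (ω k < ω ·))
    (hsep.mono (by simp [Set.subset_def]; tauto)) (x := ω k) fun j hj => by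
      rw [mem_filter] at hj; simpa [abs_of_pos (sub_pos.2 hj.2)] using hdist j hj.1
  have hbelow := sum_inv_sq_le_of_separated hδ (s := (s.erase k).filter (¬ ω k < ω ·))
    (hsep.neg.mono (by simp [Set.subset_def]; tauto)) (x := -ω k) fun j hj => by
      rw [mem_filter, not_lt] at hj
      simpa [abs_of_nonpos (sub_nonpos.2 hj.2), neg_add_eq_sub] using hdist j hj.1
  simp only [neg_sub_neg, sub_sq_comm (ω k)] at hbelow
  rw [← sum_filter_add_sum_filter_not _ (ω k < ω ·)]
  have hhalf : π ^ 2 / (3 * δ ^ 2) = π ^ 2 / (6 * δ ^ 2) + π ^ 2 / (6 * δ ^ 2) := by ring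
  linarith

lemma norm_mul_sq_le_of_separated [DecidableEq ι] {ω : ι → ℝ} {δ : ℝ} (hδ : 0 < δ)
    {s : Finset ι} (hsep : Separated ω δ s) {k : ι} (hk : k ∈ s) {a : ι → ℂ} {M : ℝ}
    (hM0 : 0 ≤ M) (hM : ∀ j ∈ s.erase k, ‖a j‖ ≤ M) {ℓ : ℝ} (hℓ : 0 ≤ ℓ) :
    ‖a k‖ * ℓ ^ 2 ≤ ℓ * (∫ t in -ℓ..ℓ, ‖trigPoly ω s a t‖) + M / (3 * δ ^ 2) := by
  have hne : ∀ j ∈ s.erase k, ω j ≠ ω k := fun j hj heq => by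
    have := hsep (mem_of_mem_erase hj) hk (ne_of_mem_erase hj)
    simp only [heq, sub_self, abs_zero] at this
    linarith
  have hsum : ∑ j ∈ s.erase k, ‖a j‖ / (π ^ 2 * (ω j - ω k) ^ 2) ≤ M / (3 * δ ^ 2) :=
    calc ∑ j ∈ s.erase k, ‖a j‖ / (π ^ 2 * (ω j - ω k) ^ 2)
        ≤ ∑ j ∈ s.erase k, M / π ^ 2 * (1 / (ω j - ω k) ^ 2) := sum_le_sum fun j hj => by
          rw [div_mul_div_comm, mul_one]; gcongr; exact hM j hj
      _ ≤ M / π ^ 2 * (π ^ 2 / (3 * δ ^ 2)) := by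
          rw [← mul_sum]; gcongr; exact sum_erase_inv_sq_le_of_separated hδ hsep hk
      _ = M / (3 * δ ^ 2) := by field_simp
  linarith [norm_mul_sq_le_integral_add_sum hk hne a hℓ]

def L1CoeffBound (ω : ι → ℝ) (S : Set ι) (ℓ c : ℝ) : Prop :=
  ∀ s : Finset ι, ↑s ⊆ S → ∀ (a : ι → ℂ), ∀ j ∈ s,
    c * ‖a j‖ ≤ ∫ t in -ℓ..ℓ, ‖trigPoly ω s a t‖

lemma l1CoeffBound_of_separated {ω : ι → ℝ} {δ : ℝ} (hδ : 0 < δ) {S : Set ι}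
    (hsep : Separated ω δ S) {ℓ : ℝ} (hℓ : 1 ≤ δ * ℓ) : L1CoeffBound ω S ℓ (ℓ / 2) := by
  classical
  intro s hs a j hj
  have hℓ0 : 0 < ℓ := pos_of_mul_pos_right (one_pos.trans_le hℓ) hδ.le
  obtain ⟨k, hk, hmax⟩ := s.exists_max_image (‖a ·‖) ⟨j, hj⟩
  have hext := norm_mul_sq_le_of_separated hδ (hsep.mono hs) hk (norm_nonneg (a k))
    (fun i hi => hmax i (mem_of_mem_erase hi)) hℓ0.le
  have hsmall : ‖a k‖ / (3 * δ ^ 2) ≤ ‖a k‖ * ℓ ^ 2 / 3 := by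
    rw [div_le_div_iff₀ (by positivity) (by norm_num)]
    nlinarith [norm_nonneg (a k), mul_le_mul hℓ hℓ zero_le_one (by positivity)]
  nlinarith [hmax j hj, norm_nonneg (a k)]

lemma exists_mem_Icc_le_norm_freqExp_sub_one {δ η μ : ℝ} (hδ : 0 < δ) (hη : 0 < η)
    (hμ : δ ≤ |μ|) : ∃ h ∈ Set.Icc 0 η, 2 * min 1 (2 * δ * η) ≤ ‖freqExp μ h - 1‖ := by
  have hμ0 : 0 < |μ| := hδ.trans_le hμ
  set h := min η (1 / (2 * |μ|))
  have hh0 : 0 ≤ h := le_min hη.le (by positivity)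
  have hx : π * |μ| * h ≤ π / 2 := by
    have := mul_le_mul_of_nonneg_left (min_le_right η (1 / (2 * |μ|))) (mul_pos pi_pos hμ0).le
    rwa [show π * |μ| * (1 / (2 * |μ|)) = π / 2 by field_simp] at this
  have hsin : 2 * |μ| * h ≤ |sin (π * μ * h)| := by
    have hjordan := mul_le_sin (by positivity) hx
    rw [show 2 / π * (π * |μ| * h) = 2 * |μ| * h by field_simp] at hjordan
    rcases abs_choice μ with hab | hab <;> rw [hab] at hjordan ⊢
    · exact hjordan.trans (le_abs_self _)
    · rw [show π * -μ * h = -(π * μ * h) by ring, sin_neg] at hjordan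
      exact hjordan.trans (neg_le_abs _)
  have hmin : min 1 (2 * δ * η) ≤ 2 * |μ| * h := by
    rw [mul_min_of_nonneg _ _ (by positivity), min_comm,
      show 2 * |μ| * (1 / (2 * |μ|)) = 1 by field_simp]
    exact min_le_min_right 1 (by gcongr)
  exact ⟨h, ⟨hh0, min_le_left _ _⟩, by rw [norm_freqExp_sub_one]; linarith⟩

lemma trigPoly_mul_freqExp_sub (ω : ι → ℝ) (s : Finset ι) (a : ι → ℂ) (μ h t : ℝ) :
    trigPoly ω s (fun j => a j * (freqExp (ω j) h - freqExp μ h)) t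
      = trigPoly ω s a (t + h) - freqExp μ h * trigPoly ω s a t := by
  simp only [trigPoly, mul_sum, ← sum_sub_distrib, freqExp_add_right]
  exact sum_congr rfl fun j _ => by ring

lemma L1CoeffBound.mono_length {ω : ι → ℝ} {S : Set ι} {ℓ ℓ' c : ℝ} (h : L1CoeffBound ω S ℓ c)
    (hℓ : 0 ≤ ℓ) (hℓℓ' : ℓ ≤ ℓ') : L1CoeffBound ω S ℓ' c := fun s hs a j hj =>
  (h s hs a j hj).trans
    (integral_norm_mono_interval (continuous_trigPoly _ _ _) (by linarith) (by linarith) hℓℓ')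

/-- Haraux's trick: `t ↦ P(t + h) - e(ω b h) P(t)` no longer contains the frequency `ω b`, and `h`
is chosen so that the coefficient of `ω i` is not damped by more than a fixed factor. -/
lemma L1CoeffBound.mul_norm_le_of_mem_erase [DecidableEq ι] {ω : ι → ℝ} {S : Set ι} {ℓ c : ℝ}
    (hS : L1CoeffBound ω S ℓ c) (hc : 0 ≤ c) (hℓ : 0 ≤ ℓ) {δ η : ℝ} (hδ : 0 < δ) (hη : 0 < η)
    {s : Finset ι} {b i : ι} (hs : ↑(s.erase b) ⊆ S) (hi : i ∈ s.erase b)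
    (hsep : δ ≤ |ω i - ω b|) (a : ι → ℂ) :
    c * min 1 (2 * δ * η) * ‖a i‖ ≤ ∫ t in -(ℓ + η)..(ℓ + η), ‖trigPoly ω s a t‖ := by
  obtain ⟨h, hh, hlow⟩ := exists_mem_Icc_le_norm_freqExp_sub_one hδ hη hsep
  set a' : ι → ℂ := fun j => a j * (freqExp (ω j) h - freqExp (ω b) h)
  have hpoly : trigPoly ω (s.erase b) a'
      = fun t => trigPoly ω s a (t + h) - freqExp (ω b) h * trigPoly ω s a t := by
    ext t
    rw [trigPoly, sum_erase s (by simp [a']), ← trigPoly, trigPoly_mul_freqExp_sub]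
  have hcoeff : ‖a' i‖ = ‖a i‖ * ‖freqExp (ω i - ω b) h - 1‖ := by
    have : freqExp (ω i) h = freqExp (ω i - ω b) h * freqExp (ω b) h := by
      rw [← freqExp_add_left, sub_add_cancel]
    rw [norm_mul, this, ← sub_one_mul, norm_mul, norm_freqExp, mul_one]
  have hold := hS _ hs a' i hi
  rw [hpoly] at hold
  have hshift :=
    integral_norm_add_sub_mul_le (continuous_trigPoly ω s a) (norm_freqExp (ω b) h) hℓ hh
  have hdamp : c * (2 * min 1 (2 * δ * η)) * ‖a i‖ ≤ c * ‖a' i‖ := by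
    rw [hcoeff, mul_assoc, mul_comm ‖a i‖]
    gcongr
  linarith

lemma L1CoeffBound.insert [DecidableEq ι] {ω : ι → ℝ} {S : Set ι} {ℓ c : ℝ}
    (hS : L1CoeffBound ω S ℓ c) (hc : 0 < c) (hℓ : 0 ≤ ℓ) {δ η : ℝ} (hδ : 0 < δ) (hη : 0 < η)
    {b : ι} (hsep : Separated ω δ (insert b S)) :
    ∃ c' > 0, L1CoeffBound ω (insert b S) (ℓ + η) c' := by
  set c₁ := c * min 1 (2 * δ * η)
  have hc₁ : 0 < c₁ := mul_pos hc (lt_min one_pos (by positivity))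
  set ℓ' := ℓ + η
  have hℓ' : 0 < ℓ' := add_pos_of_nonneg_of_pos hℓ hη
  refine ⟨min c₁ (ℓ' ^ 2 / (ℓ' + 1 / (3 * c₁ * δ ^ 2))), lt_min hc₁ (by positivity), ?_⟩
  intro s hs a j hj
  set J := ∫ t in -ℓ'..ℓ', ‖trigPoly ω s a t‖
  have hs' : ↑(s.erase b) ⊆ S := fun i hi =>
    (Set.mem_insert_iff.1 (hs (mem_of_mem_erase hi))).resolve_left (ne_of_mem_erase hi)
  have hold : ∀ i ∈ s.erase b, c₁ * ‖a i‖ ≤ J := fun i hi =>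
    hS.mul_norm_le_of_mem_erase hc.le hℓ hδ hη hs' hi
      (hsep (hs (mem_of_mem_erase hi)) (Set.mem_insert b S) (ne_of_mem_erase hi)) a
  by_cases hjb : j = b
  · subst hjb
    have hJ : 0 ≤ J := integral_nonneg (by linarith) fun _ _ => norm_nonneg _
    have hext := norm_mul_sq_le_of_separated hδ (hsep.mono hs) hj (M := J / c₁)
      (by positivity) (fun i hi => (le_div_iff₀' hc₁).2 (hold i hi)) hℓ'.le
    have hJE : ‖a j‖ * ℓ' ^ 2 ≤ J * (ℓ' + 1 / (3 * c₁ * δ ^ 2)) :=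
      calc ‖a j‖ * ℓ' ^ 2 ≤ ℓ' * J + J / c₁ / (3 * δ ^ 2) := hext
        _ = J * (ℓ' + 1 / (3 * c₁ * δ ^ 2)) := by field_simp
    calc min c₁ (ℓ' ^ 2 / (ℓ' + 1 / (3 * c₁ * δ ^ 2))) * ‖a j‖
        ≤ ℓ' ^ 2 / (ℓ' + 1 / (3 * c₁ * δ ^ 2)) * ‖a j‖ := by gcongr; exact min_le_right _ _
      _ ≤ J := by rw [div_mul_eq_mul_div, div_le_iff₀ (by positivity)]; linarith
  · calc min c₁ (ℓ' ^ 2 / (ℓ' + 1 / (3 * c₁ * δ ^ 2))) * ‖a j‖ ≤ c₁ * ‖a j‖ := by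
          gcongr; exact min_le_left _ _
      _ ≤ J := hold j (mem_erase.2 ⟨hjb, hj⟩)

lemma L1CoeffBound.union_finset [DecidableEq ι] {ω : ι → ℝ} {S : Set ι} {ℓ c : ℝ}
    (hS : L1CoeffBound ω S ℓ c) (hc : 0 < c) (hℓ : 0 ≤ ℓ) {δ : ℝ} (hδ : 0 < δ) (B : Finset ι)
    (hsep : Separated ω δ (S ∪ B)) {ℓ' : ℝ} (hℓℓ' : ℓ < ℓ') :
    ∃ c' > 0, L1CoeffBound ω (S ∪ B) ℓ' c' := by
  induction B using Finset.induction_on generalizing ℓ' with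
  | empty => exact ⟨c, hc, by simpa using hS.mono_length hℓ hℓℓ'.le⟩
  | insert b B _ ih =>
    rw [coe_insert, Set.union_insert] at hsep ⊢
    obtain ⟨c₁, hc₁, h₁⟩ := ih (hsep.mono (Set.subset_insert _ _)) (ℓ' := (ℓ + ℓ') / 2)
      (by linarith)
    have hℓ' : (ℓ + ℓ') / 2 + (ℓ' - ℓ) / 2 = ℓ' := by ring
    simpa only [hℓ'] using h₁.insert hc₁ (by linarith) hδ (η := (ℓ' - ℓ) / 2) (by linarith) hsep

end NonharmonicFourier

open NonharmonicFourier in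
theorem ingham_kahane_l1_linfty_general
    (Λ : ℤ → ℝ) (hmono : StrictMono Λ)
    (hgap : Tendsto (fun k : ℤ => Λ (k + 1) - Λ k) (atTop ⊔ atBot) atTop)
    (T : ℝ) (hT : 0 < T) :
    ∃ A > (0 : ℝ), ∀ N : ℕ, 1 ≤ N → ∀ a : ℤ → ℂ, ∀ k : ℤ, |k| ≤ (N : ℤ) →
      A * ‖a k‖ ≤
        (1 / T) * ∫ t in (-(T / 2))..(T / 2),
          ‖∑ j ∈ Finset.Icc (-(N : ℤ)) (N : ℤ),
            a j * Complex.exp (2 * Real.pi * Complex.I * Λ j * t)‖ := by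
  rw [sup_comm, ← Int.cofinite_eq] at hgap
  obtain ⟨i₀, hi₀⟩ := hgap.exists_forall_le
  have hδ : 0 < Λ (i₀ + 1) - Λ i₀ := sub_pos.2 (hmono (lt_add_one i₀))
  set S := {i : ℤ | 4 / T ≤ Λ (i + 1) - Λ i}
  have hB : Sᶜ.Finite := eventually_cofinite.1 (hgap.eventually_ge_atTop (4 / T))
  have hS : L1CoeffBound Λ S (T / 4) (T / 4 / 2) :=
    l1CoeffBound_of_separated (by positivity) (separated_of_le_sub hmono.monotone fun _ hi => hi)
      (by rw [div_mul_div_cancel₀ hT.ne', div_self four_ne_zero])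
  have hcover : S ∪ ↑hB.toFinset = Set.univ := by simp
  obtain ⟨c, hc, hbound⟩ := hS.union_finset (by positivity) (by positivity) hδ hB.toFinset
    (by rw [hcover]; exact separated_of_le_sub hmono.monotone fun i _ => hi₀ i)
    (ℓ' := T / 2) (by linarith)
  refine ⟨c / T, by positivity, fun N _ a k hk => ?_⟩
  have hmain := hbound (Icc (-(N : ℤ)) N) (by simp) a k (mem_Icc.2 (abs_le.1 hk))
  rw [div_mul_eq_mul_div, one_div_mul_eq_div]
  exact div_le_div_of_nonneg_right hmain hT.le

theorem ingham_kahane_l1_linfty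
    (Λ : ℤ → ℝ) (hmono : StrictMono Λ)
    (hgap : Tendsto (fun k : ℤ => Λ (k + 1) - Λ k) (atTop ⊔ atBot) atTop)
    (hsum : Summable (fun k : ℤ => 1 / (1 + |Λ k|)))
    (T : ℝ) (hT : 0 < T) :
    ∃ A > (0 : ℝ), ∀ N : ℕ, 1 ≤ N → ∀ a : ℤ → ℂ, ∀ k : ℤ, |k| ≤ (N : ℤ) →
      A * ‖a k‖ ≤
        (1 / T) * ∫ t in (-(T / 2))..(T / 2),
          ‖∑ j ∈ Finset.Icc (-(N : ℤ)) (N : ℤ),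
            a j * Complex.exp (2 * Real.pi * Complex.I * Λ j * t)‖ :=
  ingham_kahane_l1_linfty_general Λ hmono hgap T hT
end
end

section
/- Let P(X) = a_n X^n + ⋯ + a_1 X + a_0 be a real polynomial with n ≥ 2 and a_n > 0, let Q(k,m) = ∑_{ℓ=1}^{n} a_ℓ ∑_{j=0}^{ℓ−1} k^{ℓ−1−j} m^{j}, and let E = {Q(k,m) : k, m ∈ ℤ, k ≠ m}. Fix a ∈ E, t_0 ∈ ℝ, and x_0 ∈ ℝ. Then there exists a finitely supported sequence of complex numbers (c_k)_{k∈ℤ}, not all zero (in fact supported on two indices k ≠ m with Q(k,m) = a), such that the function u(t,x) = ∑_{k∈ℤ} c_k e^{−2πi P(k) t} e^{2πi k x} satisfies u(t_0 + t, x_0 + a t) = 0 for all t ∈ ℝ. -/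
/-!
Since `P k - P m = (k - m) Q(k, m)`, along the line `x = x₀ + a t` with `a = Q(k, m)` the plane
waves `e^{2πi(k x - P(k) t)}` and `e^{2πi(m x - P(m) t)}` differ by a constant unimodular factor,
so a suitable combination of the two vanishes identically on that line.
-/

open Real Finset

section PowerDifferences

variable {R : Type*} [CommRing R]

theorem pow_sub_pow_eq_sub_mul_sum (x y : R) (ℓ : ℕ) :
    x ^ ℓ - y ^ ℓ = (x - y) * ∑ j ∈ range ℓ, x ^ (ℓ - 1 - j) * y ^ j := by
  simp_rw [mul_comm (x ^ _), geom_sum₂_comm y x, (Commute.all x y).mul_geom_sum₂]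

theorem sum_mul_pow_sub_sum_mul_pow (c : ℕ → R) (n : ℕ) (x y : R) :
    ∑ i ∈ range (n + 1), c i * x ^ i - ∑ i ∈ range (n + 1), c i * y ^ i =
      (x - y) * ∑ ℓ ∈ Icc 1 n, c ℓ * ∑ j ∈ range ℓ, x ^ (ℓ - 1 - j) * y ^ j := by
  rw [← sum_sub_distrib, range_eq_Ico, sum_eq_sum_Ico_succ_bot n.succ_pos, mul_sum]
  simp only [pow_zero, sub_self, zero_add]
  refine sum_congr rfl fun ℓ _ => ?_
  rw [← mul_sub, pow_sub_pow_eq_sub_mul_sum]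
  ring

end PowerDifferences

theorem tsum_single_sub_single_mul {α R : Type*} [DecidableEq α] [CommRing R] [TopologicalSpace R]
    [IsTopologicalAddGroup R] [T2Space R] (k m : α) (z : R) (f : α → R) :
    ∑' j, (Pi.single k 1 - Pi.single m z : α → R) j * f j = f k - z * f m := by
  have hsplit : ∀ j, (Pi.single k 1 - Pi.single m z : α → R) j * f j =
      (Pi.single k (f k) : α → R) j - (Pi.single m (z * f m) : α → R) j := by
    intro j
    simp only [Pi.sub_apply, Pi.single_apply]
    split_ifs <;> subst_vars <;> ring
  simp_rw [hsplit]
  rw [Summable.tsum_sub (hasSum_pi_single _ _).summable (hasSum_pi_single _ _).summable,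
    tsum_pi_single, tsum_pi_single]

noncomputable def planeWave (P : ℝ → ℝ) (j : ℤ) (t x : ℂ) : ℂ :=
  Complex.exp (-(2 * π * Complex.I) * P j * t) * Complex.exp (2 * π * Complex.I * (j : ℝ) * x)

theorem planeWave_eq_mul_planeWave_of_sub_eq {P : ℝ → ℝ} {k m : ℤ} {a : ℝ}
    (h : P k - P m = (k - m) * a) (t₀ x₀ t : ℂ) :
    planeWave P k (t₀ + t) (x₀ + a * t) =
      Complex.exp (2 * π * Complex.I * (k - m) * (x₀ - a * t₀)) *
        planeWave P m (t₀ + t) (x₀ + a * t) := by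
  have hC : (P k : ℂ) = P m + (k - m) * a := by exact_mod_cast eq_add_of_sub_eq' h
  simp only [planeWave, ← Complex.exp_add]
  congr 1
  push_cast
  linear_combination (-(2 * (π : ℂ) * Complex.I) * (t₀ + t)) * hC

theorem general_schrodinger_no_observability_general
    (n : ℕ) (coef : ℕ → ℝ)
    (P : ℝ → ℝ) (hP : P = fun x => ∑ i ∈ Finset.range (n + 1), coef i * x ^ i)
    (Q : ℤ → ℤ → ℝ)
    (hQ : Q = fun (k m : ℤ) => ∑ ℓ ∈ Finset.Icc 1 n, coef ℓ *
      ∑ j ∈ Finset.range ℓ, (k : ℝ) ^ (ℓ - 1 - j) * (m : ℝ) ^ j)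
    (a : ℝ) (ha : a ∈ {x : ℝ | ∃ k m : ℤ, k ≠ m ∧ Q k m = x})
    (t₀ x₀ : ℝ) :
    ∃ k m : ℤ, k ≠ m ∧ Q k m = a ∧
      ∃ c : ℤ → ℂ, Function.support c ⊆ {k, m} ∧ c ≠ 0 ∧
        ∀ t : ℝ,
          (∑' j : ℤ, c j *
            Complex.exp (-(2 * Real.pi * Complex.I) * P (j : ℝ) * (t₀ + t)) *
            Complex.exp (2 * Real.pi * Complex.I * (j : ℝ) * (x₀ + a * t))) = 0 := by
  obtain ⟨k, m, hkm, hQa⟩ := ha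
  have hPQ : P k - P m = (k - m) * a := by
    subst hP hQ hQa
    exact sum_mul_pow_sub_sum_mul_pow coef n _ _
  set ω := Complex.exp (2 * π * Complex.I * (k - m) * (x₀ - a * t₀))
  refine ⟨k, m, hkm, hQa, Pi.single k 1 - Pi.single m ω, ?_, ?_, fun t => ?_⟩
  · refine (Function.support_sub _ _).trans (Set.union_subset ?_ ?_) <;>
      refine Pi.support_single_subset.trans ?_ <;> simp
  · exact fun h => by simpa [hkm] using congrFun h k
  · refine (tsum_congr fun j => mul_assoc _ _ _).trans ?_
    refine (tsum_single_sub_single_mul k m ω fun j => planeWave P j (t₀ + t) (x₀ + a * t)).trans ?_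
    rw [planeWave_eq_mul_planeWave_of_sub_eq hPQ, sub_self]

theorem general_schrodinger_no_observability
    (n : ℕ) (hn : 2 ≤ n) (coef : ℕ → ℝ) (hlead : 0 < coef n)
    (P : ℝ → ℝ) (hP : P = fun x => ∑ i ∈ Finset.range (n + 1), coef i * x ^ i)
    (Q : ℤ → ℤ → ℝ)
    (hQ : Q = fun (k m : ℤ) => ∑ ℓ ∈ Finset.Icc 1 n, coef ℓ *
      ∑ j ∈ Finset.range ℓ, (k : ℝ) ^ (ℓ - 1 - j) * (m : ℝ) ^ j)
    (a : ℝ) (ha : a ∈ {x : ℝ | ∃ k m : ℤ, k ≠ m ∧ Q k m = x})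
    (t₀ x₀ : ℝ) :
    ∃ k m : ℤ, k ≠ m ∧ Q k m = a ∧
      ∃ c : ℤ → ℂ, Function.support c ⊆ {k, m} ∧ c ≠ 0 ∧
        ∀ t : ℝ,
          (∑' j : ℤ, c j *
            Complex.exp (-(2 * Real.pi * Complex.I) * P (j : ℝ) * (t₀ + t)) *
            Complex.exp (2 * Real.pi * Complex.I * (j : ℝ) * (x₀ + a * t))) = 0 :=
  general_schrodinger_no_observability_general n coef P hP Q hQ a ha t₀ x₀
end

section
/- Fix a ∈ ℝ, t_0 ∈ ℝ, x_0 ∈ ℝ, and T > 0. There exists a constant D > 0 (depending only on a and T) such that for every sequence of complex numbers (c_k)_{k∈ℤ} with ∑_{k∈ℤ} (1+|k|²)² |c_k|² < ∞, the function u(t,x) = ∑_{k∈ℤ} c_k e^{2πi(k² t + k x)} satisfies ∫_0^T |u(t_0 + t, x_0 + a t)|² dt ≤ D ∑_{k∈ℤ} |c_k|². -/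
/-!
Expanding `|u|²` and integrating over `[0, T]`, the `(k, l)` cross term oscillates in `t` with
frequency `k² + a k - l² - a l = (k - l)(k + l + a)`, so its integral is at most
`(T + 1) / (1 + |(k - l)(k + l + a)|) ≤ (T + 1) ((1 + (k - l)²)⁻¹ + (1 + (k + l + a)²)⁻¹)`.
This kernel is the sum of a Toeplitz and a Hankel kernel with summable symbols, so its row sums
are bounded uniformly in `k`, and the Schur test bounds the quadratic form in `|c_k|` by a constant
times `∑ |c_k|²`.
-/

open Real MeasureTheory Filter ComplexConjugate

theorem summable_inv_one_add_sq_int_add (b : ℝ) :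
    Summable fun n : ℤ => (1 + ((n : ℝ) + b) ^ 2)⁻¹ := by
  have hsingle : {n : ℤ | (n : ℝ) + b = 0}.Subsingleton := fun m (hm : (m : ℝ) + b = 0) n
    (hn : (n : ℝ) + b = 0) => Int.cast_injective (α := ℝ) (by linarith)
  refine .of_norm_bounded_eventually
    ((Real.summable_one_div_int_add_rpow b 2).mpr one_lt_two) ?_
  filter_upwards [hsingle.finite.compl_mem_cofinite] with n hn
  rw [norm_inv, Real.norm_of_nonneg (by positivity), Real.rpow_two, sq_abs, one_div]
  exact inv_anti₀ (sq_pos_of_ne_zero hn) (by linarith)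

theorem hasSum_comp_sub_add_comp_add {G M : Type*} [AddGroup G] [AddCommMonoid M]
    [TopologicalSpace M] [ContinuousAdd M] {g h : G → M} (hg : Summable g) (hh : Summable h)
    (k : G) : HasSum (fun l => g (k - l) + h (k + l)) (∑' m, g m + ∑' m, h m) :=
  ((Equiv.subLeft k).hasSum_iff.mpr hg.hasSum).add ((Equiv.addLeft k).hasSum_iff.mpr hh.hasSum)

theorem summable_norm_of_summable_one_add_sq_sq_mul_norm_sq {E : Type*}
    [SeminormedAddCommGroup E] {c : ℤ → E}
    (hc : Summable fun k : ℤ => (1 + (k : ℝ) ^ 2) ^ 2 * ‖c k‖ ^ 2) :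
    Summable fun k => ‖c k‖ := by
  refine .of_nonneg_of_le (fun _ => norm_nonneg _) (fun k => ?_)
    ((hc.add (by simpa using summable_inv_one_add_sq_int_add 0)).div_const 2)
  set w : ℝ := 1 + (k : ℝ) ^ 2
  have hw : 0 < w := by positivity
  have hw_inv : w⁻¹ ^ 2 ≤ w⁻¹ :=
    pow_le_of_le_one (by positivity) (inv_le_one_of_one_le₀ (by simp [w]; positivity)) two_ne_zero
  have hamgm := two_mul_le_add_sq (w * ‖c k‖) w⁻¹
  have hcancel : 2 * (w * ‖c k‖) * w⁻¹ = 2 * ‖c k‖ := by field_simp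
  rw [hcancel, mul_pow] at hamgm
  linarith

theorem summable_norm_sq_of_summable_norm {ι E : Type*} [SeminormedAddCommGroup E] {c : ι → E}
    (hc : Summable fun k => ‖c k‖) : Summable fun k => ‖c k‖ ^ 2 :=
  .of_nonneg_of_le (fun _ => sq_nonneg _)
    (fun k => by rw [sq]; gcongr; exact hc.le_tsum k fun _ _ => norm_nonneg _)
    (hc.mul_left (∑' k, ‖c k‖))

theorem inv_one_add_abs_mul_le (x y : ℝ) :
    (1 + |x * y|)⁻¹ ≤ (1 + x ^ 2)⁻¹ + (1 + y ^ 2)⁻¹ := by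
  rw [abs_mul]
  rcases le_total |x| |y| with h | h
  · have : x ^ 2 ≤ |x| * |y| := by rw [← sq_abs, sq]; gcongr
    exact (inv_anti₀ (by positivity) (by linarith)).trans (le_add_of_nonneg_right (by positivity))
  · have : y ^ 2 ≤ |x| * |y| := by rw [← sq_abs, sq]; gcongr
    exact (inv_anti₀ (by positivity) (by linarith)).trans (le_add_of_nonneg_left (by positivity))

theorem abs_mul_norm_integral_exp_le (θ a b : ℝ) :
    |θ| * ‖∫ t in a..b, Complex.exp (2 * π * θ * Complex.I * t)‖ ≤ π⁻¹ := by
  rcases eq_or_ne θ 0 with rfl | hθ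
  · simp [pi_pos.le]
  have hc : (2 * π * θ * Complex.I : ℂ) ≠ 0 := by simp [pi_ne_zero, hθ]
  have hc_norm : ‖(2 * π * θ * Complex.I : ℂ)‖ = 2 * π * |θ| := by
    simp [abs_of_pos pi_pos]
  have hnum : ‖Complex.exp (2 * π * θ * Complex.I * b) - Complex.exp (2 * π * θ * Complex.I * a)‖
      ≤ 2 := by
    refine (norm_sub_le _ _).trans_eq ?_
    norm_num [Complex.norm_exp]
  rw [integral_exp_mul_complex hc, norm_div, hc_norm]
  calc |θ| * (_ / (2 * π * |θ|)) ≤ |θ| * (2 / (2 * π * |θ|)) := by gcongr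
    _ = π⁻¹ := by field_simp

theorem norm_integral_exp_le {T : ℝ} (hT : 0 ≤ T) (θ : ℝ) :
    ‖∫ t in (0 : ℝ)..T, Complex.exp (2 * π * θ * Complex.I * t)‖ ≤ (T + 1) * (1 + |θ|)⁻¹ := by
  rw [le_mul_inv_iff₀ (by positivity), mul_one_add]
  have hT_bound : ‖∫ t in (0 : ℝ)..T, Complex.exp (2 * π * θ * Complex.I * t)‖ ≤ T := by
    have := intervalIntegral.norm_integral_le_of_norm_le_const (a := 0) (b := T) fun t _ =>
      (by simp [Complex.norm_exp] : ‖Complex.exp (2 * π * θ * Complex.I * t)‖ ≤ 1)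
    rwa [one_mul, sub_zero, abs_of_nonneg hT] at this
  have := abs_mul_norm_integral_exp_le θ 0 T
  have : π⁻¹ ≤ 1 := inv_le_one_of_one_le₀ (by linarith [pi_gt_three])
  linarith

section Schur

variable {ι : Type*} {K : ι → ι → ℝ} {C : ℝ} {s : ι → ℝ}

theorem summable_sq_mul_kernel_and_tsum_le (hK : ∀ k l, 0 ≤ K k l) (hrow : ∀ k, Summable (K k))
    (hC : ∀ k, ∑' l, K k l ≤ C) (hs : Summable fun k => s k ^ 2) :
    Summable (fun p : ι × ι => s p.1 ^ 2 * K p.1 p.2) ∧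
      ∑' p : ι × ι, s p.1 ^ 2 * K p.1 p.2 ≤ C * ∑' k, s k ^ 2 := by
  have hrow' : ∀ k, Summable fun l => s k ^ 2 * K k l := fun k => (hrow k).mul_left _
  have hrowsum : ∀ k, ∑' l, s k ^ 2 * K k l ≤ C * s k ^ 2 := fun k => by
    rw [tsum_mul_left, mul_comm]; exact mul_le_mul_of_nonneg_right (hC k) (sq_nonneg _)
  have hrowsum_summable : Summable fun k => ∑' l, s k ^ 2 * K k l :=
    .of_nonneg_of_le (fun k => tsum_nonneg fun l => mul_nonneg (sq_nonneg _) (hK _ _))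
      hrowsum (hs.mul_left C)
  have hsum : Summable fun p : ι × ι => s p.1 ^ 2 * K p.1 p.2 :=
    (summable_prod_of_nonneg fun p => mul_nonneg (sq_nonneg _) (hK _ _)).mpr
      ⟨hrow', hrowsum_summable⟩
  refine ⟨hsum, ?_⟩
  rw [hsum.tsum_prod' hrow', ← tsum_mul_left]
  exact Summable.tsum_le_tsum hrowsum hrowsum_summable (hs.mul_left C)

theorem schur_test (hK : ∀ k l, 0 ≤ K k l) (hsymm : ∀ k l, K k l = K l k)
    (hrow : ∀ k, Summable (K k)) (hC : ∀ k, ∑' l, K k l ≤ C)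
    (hs₀ : ∀ k, 0 ≤ s k) (hs : Summable fun k => s k ^ 2) :
    Summable (fun p : ι × ι => s p.1 * s p.2 * K p.1 p.2) ∧
      ∑' p : ι × ι, s p.1 * s p.2 * K p.1 p.2 ≤ C * ∑' k, s k ^ 2 := by
  obtain ⟨hsum, hle⟩ := summable_sq_mul_kernel_and_tsum_le hK hrow hC hs
  have hswap : ∀ p : ι × ι, s p.2 ^ 2 * K p.1 p.2 = s p.swap.1 ^ 2 * K p.swap.1 p.swap.2 :=
    fun p => by rw [hsymm]; rfl
  have hsum' : Summable fun p : ι × ι => s p.2 ^ 2 * K p.1 p.2 := by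
    simp_rw [hswap]; exact (Equiv.prodComm ι ι).summable_iff.mpr hsum
  have htsum' : ∑' p : ι × ι, s p.2 ^ 2 * K p.1 p.2 = ∑' p : ι × ι, s p.1 ^ 2 * K p.1 p.2 := by
    simp_rw [hswap]; exact (Equiv.prodComm ι ι).tsum_eq (fun p => s p.1 ^ 2 * K p.1 p.2)
  have hamgm : ∀ p : ι × ι, s p.1 * s p.2 * K p.1 p.2 ≤
      (s p.1 ^ 2 * K p.1 p.2 + s p.2 ^ 2 * K p.1 p.2) / 2 := fun p => by
    have := mul_le_mul_of_nonneg_right (two_mul_le_add_sq (s p.1) (s p.2)) (hK p.1 p.2)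
    linarith
  have hdom := (hsum.add hsum').div_const 2
  have hsmall : Summable fun p : ι × ι => s p.1 * s p.2 * K p.1 p.2 :=
    .of_nonneg_of_le (fun p => mul_nonneg (mul_nonneg (hs₀ _) (hs₀ _)) (hK _ _)) hamgm hdom
  refine ⟨hsmall, ?_⟩
  calc ∑' p : ι × ι, s p.1 * s p.2 * K p.1 p.2
      ≤ ∑' p : ι × ι, (s p.1 ^ 2 * K p.1 p.2 + s p.2 ^ 2 * K p.1 p.2) / 2 :=
        hsmall.tsum_le_tsum hamgm hdom
    _ = ∑' p : ι × ι, s p.1 ^ 2 * K p.1 p.2 := by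
      rw [tsum_div_const, hsum.tsum_add hsum', htsum', add_self_div_two]
    _ ≤ C * ∑' k, s k ^ 2 := hle

end Schur

section AlmostOrthogonality

variable {X ι : Type*} [MeasurableSpace X] {μ : Measure X} [IsFiniteMeasure μ] [Countable ι]
  {f : ι → X → ℂ} {c : ι → ℂ}

theorem integral_norm_tsum_sq_le_tsum
    (hf : ∀ k, AEStronglyMeasurable (f k) μ) (hf₁ : ∀ k x, ‖f k x‖ ≤ 1)
    (hc : Summable fun k => ‖c k‖) :
    ∫ x, ‖∑' k, c k * f k x‖ ^ 2 ∂μ ≤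
      ∑' p : ι × ι, ‖c p.1‖ * ‖c p.2‖ * ‖∫ x, f p.1 x * conj (f p.2 x) ∂μ‖ := by
  set F : ι × ι → X → ℂ := fun p x => c p.1 * f p.1 x * conj (c p.2 * f p.2 x)
  have hF_le : ∀ p x, ‖F p x‖ ≤ ‖c p.1‖ * ‖c p.2‖ := fun p x => by
    simp only [F, norm_mul, RCLike.norm_conj]
    gcongr <;> exact (mul_le_of_le_one_right (norm_nonneg _) (hf₁ _ _))
  have hF_int : ∀ p, Integrable (F p) μ := fun p =>
    .of_bound (((hf p.1).const_mul _).mul ((hf p.2).const_mul _).star) _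
      (.of_forall (hF_le p))
  have hcc : Summable fun p : ι × ι => ‖c p.1‖ * ‖c p.2‖ := hc.mul_of_nonneg hc
    (fun _ => norm_nonneg _) (fun _ => norm_nonneg _)
  have hF_sum : Summable fun p => ∫ x, ‖F p x‖ ∂μ :=
    .of_nonneg_of_le (fun p => integral_nonneg fun x => norm_nonneg _)
      (fun p => (integral_mono (hF_int p).norm (integrable_const _) (hF_le p)).trans_eq
        (by rw [integral_const, smul_eq_mul])) (hcc.mul_left (μ.real Set.univ))
  have hsq : ∀ x, ((‖∑' k, c k * f k x‖ ^ 2 : ℝ) : ℂ) = ∑' p, F p x := fun x => by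
    have hterm : Summable fun k => ‖c k * f k x‖ := .of_nonneg_of_le (fun _ => norm_nonneg _)
      (fun k => by rw [norm_mul]; exact mul_le_of_le_one_right (norm_nonneg _) (hf₁ _ _)) hc
    rw [Complex.ofReal_pow, ← Complex.mul_conj', Complex.conj_tsum,
      tsum_mul_tsum_of_summable_norm hterm (by simpa only [RCLike.norm_conj] using hterm)]
  calc ∫ x, ‖∑' k, c k * f k x‖ ^ 2 ∂μ
      ≤ ‖((∫ x, ‖∑' k, c k * f k x‖ ^ 2 ∂μ : ℝ) : ℂ)‖ := by
        rw [Complex.norm_real]; exact le_abs_self _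
    _ = ‖∑' p, ∫ x, F p x ∂μ‖ := by
        rw [← integral_complex_ofReal, integral_tsum_of_summable_integral_norm hF_int hF_sum]
        simp only [hsq]
    _ ≤ ∑' p, ‖∫ x, F p x ∂μ‖ := norm_tsum_le_tsum_norm (.of_nonneg_of_le
        (fun _ => norm_nonneg _) (fun p => norm_integral_le_integral_norm _) hF_sum)
    _ = ∑' p : ι × ι, ‖c p.1‖ * ‖c p.2‖ * ‖∫ x, f p.1 x * conj (f p.2 x) ∂μ‖ := by
        refine tsum_congr fun p => ?_
        have hF : F p = fun x => c p.1 * conj (c p.2) * (f p.1 x * conj (f p.2 x)) := by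
          ext x; simp only [F, map_mul]; ring
        rw [hF, integral_const_mul, norm_mul, norm_mul, RCLike.norm_conj]

theorem integral_norm_tsum_sq_le_of_schur {K : ι → ι → ℝ} {C : ℝ}
    (hf : ∀ k, AEStronglyMeasurable (f k) μ) (hf₁ : ∀ k x, ‖f k x‖ ≤ 1)
    (hfK : ∀ k l, ‖∫ x, f k x * conj (f l x) ∂μ‖ ≤ K k l) (hsymm : ∀ k l, K k l = K l k)
    (hrow : ∀ k, Summable (K k)) (hC : ∀ k, ∑' l, K k l ≤ C)
    (hc : Summable fun k => ‖c k‖) :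
    ∫ x, ‖∑' k, c k * f k x‖ ^ 2 ∂μ ≤ C * ∑' k, ‖c k‖ ^ 2 := by
  have hK : ∀ k l, 0 ≤ K k l := fun k l => (norm_nonneg _).trans (hfK k l)
  obtain ⟨hsum, hle⟩ := schur_test hK hsymm hrow hC (fun k => norm_nonneg (c k))
    (summable_norm_sq_of_summable_norm hc)
  refine (integral_norm_tsum_sq_le_tsum hf hf₁ hc).trans (le_trans ?_ hle)
  exact Summable.tsum_le_tsum (fun p => by gcongr; exact hfK _ _)
    (.of_nonneg_of_le (fun p => by positivity) (fun p => by gcongr; exact hfK _ _) hsum) hsum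

end AlmostOrthogonality

noncomputable def schrodingerMode (k : ℤ) (t x : ℝ) : ℂ :=
  Complex.exp (2 * π * Complex.I * ((k : ℝ) ^ 2 * t + (k : ℝ) * x))

theorem norm_schrodingerMode (k : ℤ) (t x : ℝ) : ‖schrodingerMode k t x‖ = 1 := by
  rw [schrodingerMode, ← Complex.norm_exp_ofReal_mul_I (2 * π * ((k : ℝ) ^ 2 * t + k * x))]
  push_cast
  ring_nf

theorem schrodingerMode_mul_conj_along_line (a t₀ x₀ t : ℝ) (k l : ℤ) :
    schrodingerMode k (t₀ + t) (x₀ + a * t) * conj (schrodingerMode l (t₀ + t) (x₀ + a * t)) =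
      schrodingerMode k t₀ x₀ * conj (schrodingerMode l t₀ x₀) *
        Complex.exp (2 * π * ((k - l) * (k + l + a) : ℝ) * Complex.I * t) := by
  simp only [schrodingerMode, ← Complex.exp_conj, ← Complex.exp_add]
  congr 1
  simp only [map_mul, map_add, map_ofNat, Complex.conj_ofReal, Complex.conj_I, map_pow]
  push_cast
  ring

theorem norm_integral_schrodingerMode_mul_conj_le {T : ℝ} (hT : 0 ≤ T) (a t₀ x₀ : ℝ) (k l : ℤ) :
    ‖∫ t in Set.Ioc 0 T,
        schrodingerMode k (t₀ + t) (x₀ + a * t) * conj (schrodingerMode l (t₀ + t) (x₀ + a * t))‖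
      ≤ (T + 1) * (1 + ((k : ℝ) - l) ^ 2)⁻¹ + (T + 1) * (1 + ((k : ℝ) + l + a) ^ 2)⁻¹ := by
  rw [← intervalIntegral.integral_of_le hT, ← mul_add]
  simp only [schrodingerMode_mul_conj_along_line, intervalIntegral.integral_const_mul, norm_mul,
    RCLike.norm_conj, norm_schrodingerMode, one_mul]
  refine (norm_integral_exp_le hT _).trans (mul_le_mul_of_nonneg_left ?_ (by positivity))
  exact inv_one_add_abs_mul_le _ _

theorem schrodinger_l2_upper_bound
    (a : ℝ) (t₀ x₀ : ℝ) (T : ℝ) (hT : 0 < T) :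
    ∃ D > (0 : ℝ), ∀ c : ℤ → ℂ,
      Summable (fun k : ℤ => (1 + (k : ℝ) ^ 2) ^ 2 * ‖c k‖ ^ 2) →
      (∫ t in (0 : ℝ)..T,
          ‖∑' k : ℤ, c k *
            Complex.exp (2 * Real.pi * Complex.I *
              ((k : ℝ) ^ 2 * (t₀ + t) + (k : ℝ) * (x₀ + a * t)))‖ ^ 2) ≤
        D * ∑' k : ℤ, ‖c k‖ ^ 2 := by
  set g : ℤ → ℝ := fun m => (T + 1) * (1 + (m : ℝ) ^ 2)⁻¹
  set h : ℤ → ℝ := fun m => (T + 1) * (1 + ((m : ℝ) + a) ^ 2)⁻¹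
  have hg : Summable g := by simpa using (summable_inv_one_add_sq_int_add 0).mul_left (T + 1)
  have hh : Summable h := (summable_inv_one_add_sq_int_add a).mul_left (T + 1)
  have hrow := hasSum_comp_sub_add_comp_add hg hh
  refine ⟨∑' m, g m + ∑' m, h m, add_pos_of_pos_of_nonneg
    (hg.tsum_pos (fun m => by positivity) 0 (by positivity)) (tsum_nonneg fun m => by positivity),
    fun c hc => ?_⟩
  have hmode : ∀ (k : ℤ) (t : ℝ), Complex.exp (2 * Real.pi * Complex.I *
      ((k : ℝ) ^ 2 * (t₀ + t) + (k : ℝ) * (x₀ + a * t))) = schrodingerMode k (t₀ + t) (x₀ + a * t) :=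
    fun k t => by rw [schrodingerMode]; push_cast; rfl
  simp only [hmode]
  rw [intervalIntegral.integral_of_le hT.le]
  refine integral_norm_tsum_sq_le_of_schur (fun k => by unfold schrodingerMode; fun_prop)
    (fun k t => (norm_schrodingerMode _ _ _).le)
    (fun k l => by simpa only [g, h, Int.cast_sub, Int.cast_add] using norm_integral_schrodingerMode_mul_conj_le hT.le a t₀ x₀ k l)
    (fun k l => by rw [add_comm l k, ← neg_sub k l]; simp only [g, Int.cast_neg, neg_sq])
    (fun k => (hrow k).summable) (fun k => (hrow k).tsum_eq.le)
    (summable_norm_of_summable_one_add_sq_sq_mul_norm_sq hc)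
end
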